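/- arXiv:1801.00328 — 2 statements merged into one kernel-verified Lean document; each statement's English description precedes it below -/
import Mathlib

section
/- For a set P of n ≥ 5 points in convex position, among the union max-cliques of the path graph G(P), all have size 2 except for exactly one, which has size n and whose vertices are precisely the n boundary paths of P (each consisting of all hull edges except one). -/
/-!
Let `u` and `v` be adjacent, so that `v = u - f + g`. Every member of the union clique is
`u + g` minus one edge, and deleting `g` or `f` gives back `u` or `v`. In the order of the path
`u`, the chord `g` either joins the two ends of `u`, and then `u + g` is a Hamiltonian cycle, or
one of its endpoints is an inner vertex of `u`. In the second case that vertex has degree three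
in `u + g`, and `g` closes a cycle with a segment of `u`; a deletion that leaves a path must
break this cycle and lower the degree, and only one edge of `u`, namely `f`, does both. In the
first case, a non-crossing Hamiltonian cycle on points in convex position is the hull, whose
one-edge deletions are the `n` boundary paths; any other Hamiltonian cycle has a crossing pair,
which can only be `f` and `g`, and every other deletion keeps both.
-/

namespace PG

/-- The `k`-th vertex (mod `n`) of the convex polygon. -/
def pt (n : ℕ) (hn : 0 < n) (k : ℕ) : Fin n := ⟨k % n, Nat.mod_lt _ hn⟩

/-- `e` is a boundary (convex hull) edge of the convex `n`-gon. -/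
def IsHullEdge {n : ℕ} (e : Sym2 (Fin n)) : Prop :=
  ∃ a b : Fin n, e = s(a, b) ∧ ((a.val + 1) % n = b.val ∨ (b.val + 1) % n = a.val)

instance {n : ℕ} : DecidablePred (IsHullEdge (n := n)) := fun _ => by
  unfold IsHullEdge; infer_instance

/-- Two chords of the convex `n`-gon cross (intersect in interior points):
their endpoint pairs are all distinct and separate each other in the cyclic order. -/
def Crosses {n : ℕ} (e f : Sym2 (Fin n)) : Prop :=
  ∃ a b c d : Fin n, e = s(a, b) ∧ f = s(c, d) ∧
    a ≠ b ∧ c ≠ d ∧ a ≠ c ∧ a ≠ d ∧ b ≠ c ∧ b ≠ d ∧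
    (((c.val + n - a.val) % n < (b.val + n - a.val) % n) ↔
      ¬((d.val + n - a.val) % n < (b.val + n - a.val) % n))

instance {n : ℕ} (e f : Sym2 (Fin n)) : Decidable (Crosses e f) := by
  unfold Crosses; infer_instance

/-- The edge set of the spanning path visiting the points in the order given
by the permutation `p`. -/
def pathEdges {n : ℕ} (p : Equiv.Perm (Fin n)) : Finset (Sym2 (Fin n)) :=
  Finset.univ.filter (fun e => ∃ i j : Fin n, e = s(p i, p j) ∧ j.val = i.val + 1)

/-- `E` is the edge set of a non-crossing (plane) spanning path. -/
def IsNCPath {n : ℕ} (E : Finset (Sym2 (Fin n))) : Prop :=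
  (∃ p : Equiv.Perm (Fin n), E = pathEdges p) ∧ ∀ e ∈ E, ∀ f ∈ E, ¬ Crosses e f

instance {n : ℕ} : DecidablePred (IsNCPath (n := n)) := fun _ => by
  unfold IsNCPath pathEdges; infer_instance

/-- Vertices of the path graph `G(P)`: non-crossing spanning paths. -/
def PVert (n : ℕ) := {E : Finset (Sym2 (Fin n)) // IsNCPath E}

instance {n : ℕ} : Fintype (PVert n) := Subtype.fintype _
instance {n : ℕ} : DecidableEq (PVert n) := Subtype.instDecidableEq

/-- The path graph `G(P)`: two plane spanning paths are adjacent iff their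
edge sets differ in exactly two edges. -/
def pathGraph (n : ℕ) : SimpleGraph (PVert n) where
  Adj u v := u ≠ v ∧ (u.1 \ v.1 ∪ v.1 \ u.1).card = 2
  symm := ⟨by rintro u v ⟨h1, h2⟩; exact ⟨h1.symm, by rwa [Finset.union_comm]⟩⟩
  loopless := ⟨by rintro u ⟨h, _⟩; exact h rfl⟩

instance {n : ℕ} : DecidableRel (pathGraph n).Adj := fun u v => by
  unfold pathGraph; infer_instance

/-- `v` is a boundary path: all its edges are hull edges. -/
def IsBoundary {n : ℕ} (v : PVert n) : Prop := ∀ e ∈ v.1, IsHullEdge e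

/-- Number of diagonals (the level) of a path. -/
def diagCount {n : ℕ} (v : PVert n) : ℕ :=
  (v.1.filter (fun e => ¬ IsHullEdge e)).card

/-- Degree of a point in an edge set. -/
def degIn {n : ℕ} (E : Finset (Sym2 (Fin n))) (x : Fin n) : ℕ :=
  (E.filter (fun e => x ∈ e)).card

/-- The union max-clique of adjacent `u, v`: all plane spanning paths whose edge set
is `u ∪ v` minus one edge. -/
def unionClique {n : ℕ} (u v : PVert n) : Set (PVert n) :=
  {w | ∃ e ∈ u.1 ∪ v.1, w.1 = (u.1 ∪ v.1).erase e}

lemma mod_eq_ite_of_lt_two_mul {n x : ℕ} (hx : x < 2 * n) :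
    x % n = if x < n then x else x - n := by
  split_ifs with h
  · exact Nat.mod_eq_of_lt h
  · rw [Nat.mod_eq_sub_mod (by omega), Nat.mod_eq_of_lt (by omega)]

lemma add_sub_mod_eq_ite {n a c : ℕ} (ha : a < n) (hc : c < n) :
    (c + n - a) % n = if a ≤ c then c - a else c + n - a := by
  rw [mod_eq_ite_of_lt_two_mul (by omega)]
  split_ifs <;> omega

lemma add_mod_eq_self_iff {n j m : ℕ} (hn : 0 < n) :
    (j + m) % n = j % n ↔ m % n = 0 := by
  have := Nat.mod_lt j hn
  have := Nat.mod_lt m hn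
  rw [Nat.add_mod, mod_eq_ite_of_lt_two_mul (by omega)]
  split_ifs <;> omega

section PathIndexing

variable {n : ℕ} (hn : 0 < n)

/-- The `i`-th vertex of the tour `p`, with `i` read modulo `n`. -/
def pathVertex (p : Equiv.Perm (Fin n)) (i : ℕ) : Fin n := p (pt n hn i)

def pathEdge (p : Equiv.Perm (Fin n)) (i : ℕ) : Sym2 (Fin n) :=
  s(pathVertex hn p i, pathVertex hn p (i + 1))

variable {hn} {p : Equiv.Perm (Fin n)}

lemma pathVertex_eq_iff {i j : ℕ} : pathVertex hn p i = pathVertex hn p j ↔ i % n = j % n := by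
  rw [pathVertex, pathVertex, p.injective.eq_iff, Fin.ext_iff]
  rfl

lemma symm_pathVertex (i : ℕ) : (p.symm (pathVertex hn p i)).val = i % n := by
  rw [pathVertex, Equiv.symm_apply_apply]
  rfl

lemma eq_pathVertex_iff {x : Fin n} {i : ℕ} :
    x = pathVertex hn p i ↔ (p.symm x).val = i % n := by
  rw [pathVertex, ← Equiv.symm_apply_eq, Fin.ext_iff]
  rfl

lemma pathVertex_ne_of_lt {i j : ℕ} (hij : i < j) (hji : j < i + n) :
    pathVertex hn p i ≠ pathVertex hn p j := by
  rw [Ne, pathVertex_eq_iff, show j = i + (j - i) by omega, eq_comm, add_mod_eq_self_iff hn,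
    Nat.mod_eq_of_lt (by omega)]
  omega

lemma mem_pathEdge_iff {x : Fin n} {i : ℕ} :
    x ∈ pathEdge hn p i ↔ (p.symm x).val = i % n ∨ (p.symm x).val = (i + 1) % n := by
  rw [pathEdge, Sym2.mem_iff, eq_pathVertex_iff, eq_pathVertex_iff]

lemma pathEdge_mod (h2 : 2 ≤ n) (i : ℕ) : pathEdge hn p (i % n) = pathEdge hn p i := by
  rw [pathEdge, pathEdge, pathVertex_eq_iff.2 (Nat.mod_mod i n),
    pathVertex_eq_iff.2 (show (i % n + 1) % n = (i + 1) % n by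
      rw [Nat.add_mod i, Nat.mod_eq_of_lt (show 1 < n by omega)])]

lemma pathEdge_injOn (h3 : 3 ≤ n) : Set.InjOn (pathEdge hn p) (Set.Iio n) := by
  intro i hi j hj h
  rw [Set.mem_Iio] at hi hj
  rw [pathEdge, pathEdge, Sym2.eq_iff, pathVertex_eq_iff, pathVertex_eq_iff, pathVertex_eq_iff,
    pathVertex_eq_iff, Nat.mod_eq_of_lt hi, Nat.mod_eq_of_lt hj,
    mod_eq_ite_of_lt_two_mul (by omega), mod_eq_ite_of_lt_two_mul (by omega)] at h
  split_ifs at h <;> omega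

lemma not_isDiag_pathEdge (h2 : 2 ≤ n) (i : ℕ) : ¬ (pathEdge hn p i).IsDiag := by
  rw [pathEdge, Sym2.mk_isDiag_iff]
  exact pathVertex_ne_of_lt (Nat.lt_succ_self i) (by omega)

lemma pathEdges_eq_image : pathEdges p = (Finset.range (n - 1)).image (pathEdge hn p) := by
  ext e
  simp only [pathEdges, Finset.mem_filter, Finset.mem_univ, true_and, Finset.mem_image,
    Finset.mem_range]
  constructor
  · rintro ⟨i, j, rfl, hij⟩
    refine ⟨i.val, by omega, ?_⟩
    have hi : pt n hn i = i := Fin.ext (Nat.mod_eq_of_lt i.isLt)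
    have hj : pt n hn (i + 1) = j := Fin.ext (by rw [← hij]; exact Nat.mod_eq_of_lt j.isLt)
    rw [pathEdge, pathVertex, pathVertex, hi, hj]
  · rintro ⟨i, hi, rfl⟩
    refine ⟨pt n hn i, pt n hn (i + 1), rfl, ?_⟩
    simp only [pt, Nat.mod_eq_of_lt (show i < n by omega),
      Nat.mod_eq_of_lt (show i + 1 < n by omega)]

lemma mem_pathEdges_iff {e : Sym2 (Fin n)} :
    e ∈ pathEdges p ↔ ∃ i, i + 1 < n ∧ pathEdge hn p i = e := by
  rw [pathEdges_eq_image (hn := hn), Finset.mem_image]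
  simp only [Finset.mem_range]
  exact ⟨fun ⟨i, hi, he⟩ => ⟨i, by omega, he⟩, fun ⟨i, hi, he⟩ => ⟨i, by omega, he⟩⟩

lemma pathVertex_mem_pathEdge_sub_one {i : ℕ} (hi : 0 < i) :
    pathVertex hn p i ∈ pathEdge hn p (i - 1) := by
  rw [pathEdge, Nat.sub_add_cancel hi]
  exact Sym2.mem_mk_right _ _

lemma pathEdge_mem_pathEdges {i : ℕ} (hi : i + 1 < n) : pathEdge hn p i ∈ pathEdges p :=
  mem_pathEdges_iff.2 ⟨i, hi, rfl⟩

end PathIndexing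

section PathDegrees

variable {n : ℕ} {hn : 0 < n} {p : Equiv.Perm (Fin n)}

lemma card_pathEdges (h3 : 3 ≤ n) : (pathEdges p).card = n - 1 := by
  rw [pathEdges_eq_image (hn := show 0 < n by omega), Finset.card_image_of_injOn, Finset.card_range]
  rw [Finset.coe_range]
  exact (pathEdge_injOn h3).mono (Set.Iio_subset_Iio (Nat.sub_le n 1))

lemma eq_pathEdge_of_mem {e : Sym2 (Fin n)} {m : ℕ} (he : e ∈ pathEdges p) (hm : m < n)
    (hx : pathVertex hn p m ∈ e) : e = pathEdge hn p (m - 1) ∨ e = pathEdge hn p m := by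
  obtain ⟨i, hi, rfl⟩ := (mem_pathEdges_iff (hn := hn)).1 he
  rw [mem_pathEdge_iff, symm_pathVertex, Nat.mod_eq_of_lt hm, Nat.mod_eq_of_lt (by omega),
    Nat.mod_eq_of_lt hi] at hx
  rcases hx with rfl | rfl
  · exact Or.inr rfl
  · exact Or.inl rfl

lemma degIn_pathEdges_le_two (x : Fin n) : degIn (pathEdges p) x ≤ 2 := by
  have hn : 0 < n := x.pos
  have hx : x = pathVertex hn p (p.symm x) := by
    rw [eq_pathVertex_iff, Nat.mod_eq_of_lt (p.symm x).isLt]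
  calc degIn (pathEdges p) x
      ≤ ({pathEdge hn p ((p.symm x).val - 1), pathEdge hn p (p.symm x)} : Finset _).card := by
        refine Finset.card_le_card fun e he => ?_
        rw [Finset.mem_filter] at he
        rw [hx] at he
        rcases eq_pathEdge_of_mem he.1 (p.symm x).isLt he.2 with h | h <;> simp [h]
    _ ≤ 2 := Finset.card_le_two

lemma three_le_degIn {E : Finset (Sym2 (Fin n))} {x : Fin n} {e₁ e₂ e₃ : Sym2 (Fin n)}
    (h₁ : e₁ ∈ E) (h₂ : e₂ ∈ E) (h₃ : e₃ ∈ E) (hx₁ : x ∈ e₁) (hx₂ : x ∈ e₂) (hx₃ : x ∈ e₃)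
    (h₁₂ : e₁ ≠ e₂) (h₁₃ : e₁ ≠ e₃) (h₂₃ : e₂ ≠ e₃) : 3 ≤ degIn E x := by
  calc 3 = ({e₁, e₂, e₃} : Finset _).card := by
        rw [Finset.card_insert_of_notMem (by simp [h₁₂, h₁₃]), Finset.card_pair h₂₃]
    _ ≤ degIn E x := Finset.card_le_card (by
        intro e he
        simp only [Finset.mem_insert, Finset.mem_singleton] at he
        rcases he with rfl | rfl | rfl <;> exact Finset.mem_filter.2 ⟨‹_›, ‹_›⟩)

end PathDegrees

def IsLeafless {n : ℕ} (C : Finset (Sym2 (Fin n))) : Prop :=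
  ∀ e ∈ C, ∀ x ∈ e, ∃ e' ∈ C, e' ≠ e ∧ x ∈ e'

section Leafless

variable {n : ℕ} {hn : 0 < n} {p : Equiv.Perm (Fin n)}

/-- The first edge of `C` along the path has a leaf at its first vertex. -/
lemma not_subset_pathEdges_of_isLeafless {C : Finset (Sym2 (Fin n))} (hC : C.Nonempty)
    (hleaf : IsLeafless C) : ¬ C ⊆ pathEdges p := by
  intro hsub
  obtain ⟨e, he⟩ := hC
  have hn : 0 < n := e.out.1.pos
  have hex : ∃ i, i + 1 < n ∧ pathEdge hn p i ∈ C := by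
    obtain ⟨i, hi, rfl⟩ := (mem_pathEdges_iff (hn := hn)).1 (hsub he)
    exact ⟨i, hi, he⟩
  obtain ⟨hi, hiC⟩ := Nat.find_spec hex
  obtain ⟨e', heC, hne, hx⟩ :=
    hleaf _ hiC (pathVertex hn p (Nat.find hex)) (Sym2.mem_mk_left _ _)
  rcases eq_pathEdge_of_mem (hsub heC) (by omega) hx with rfl | rfl
  · have := Nat.find_min' hex (m := Nat.find hex - 1) ⟨by omega, heC⟩
    exact hne (congrArg _ (by omega))
  · exact hne rfl

variable (hn p) in
def chordCycle (a b : ℕ) : Finset (Sym2 (Fin n)) :=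
  insert s(pathVertex hn p a, pathVertex hn p b) ((Finset.Ico a b).image (pathEdge hn p))

lemma chord_ne_pathEdge {a b i : ℕ} (hab : a + 2 ≤ b) (hb : b < n) (hi : i + 1 < n) :
    s(pathVertex hn p a, pathVertex hn p b) ≠ pathEdge hn p i := by
  rw [pathEdge, Ne, Sym2.eq_iff, pathVertex_eq_iff, pathVertex_eq_iff, pathVertex_eq_iff,
    pathVertex_eq_iff]
  simp only [Nat.mod_eq_of_lt (show a < n by omega), Nat.mod_eq_of_lt hb,
    Nat.mod_eq_of_lt (show i < n by omega), Nat.mod_eq_of_lt hi]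
  omega

lemma isLeafless_chordCycle {a b : ℕ} (hab : a + 2 ≤ b) (hb : b < n) :
    IsLeafless (chordCycle hn p a b) := by
  have hF : ∀ i, a ≤ i → i < b → pathEdge hn p i ∈ chordCycle hn p a b := fun i hai hib =>
    Finset.mem_insert_of_mem (Finset.mem_image_of_mem _ (Finset.mem_Ico.2 ⟨hai, hib⟩))
  have hFne : ∀ i j, i < b → j < b → i ≠ j → pathEdge hn p i ≠ pathEdge hn p j :=
    fun i j hi hj hij h => hij (pathEdge_injOn (by omega) (show i < n by omega)
      (show j < n by omega) h)
  intro e he x hx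
  rcases Finset.mem_insert.1 he with rfl | he
  · rcases Sym2.mem_iff.1 hx with rfl | rfl
    · exact ⟨_, hF a le_rfl (by omega), (chord_ne_pathEdge hab hb (by omega)).symm,
        Sym2.mem_mk_left _ _⟩
    · exact ⟨pathEdge hn p (b - 1), hF _ (by omega) (by omega),
        (chord_ne_pathEdge hab hb (by omega)).symm, pathVertex_mem_pathEdge_sub_one (by omega)⟩
  · obtain ⟨i, hi, rfl⟩ := Finset.mem_image.1 he
    rw [Finset.mem_Ico] at hi
    rcases Sym2.mem_iff.1 hx with rfl | rfl
    · by_cases hia : i = a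
      · subst hia
        exact ⟨_, Finset.mem_insert_self _ _, chord_ne_pathEdge hab hb (by omega),
          Sym2.mem_mk_left _ _⟩
      · exact ⟨pathEdge hn p (i - 1), hF _ (by omega) (by omega),
          hFne _ _ (by omega) hi.2 (by omega), pathVertex_mem_pathEdge_sub_one (by omega)⟩
    · by_cases hib : i + 1 = b
      · refine ⟨_, Finset.mem_insert_self _ _, chord_ne_pathEdge hab hb (by omega), ?_⟩
        rw [hib]
        exact Sym2.mem_mk_right _ _
      · exact ⟨pathEdge hn p (i + 1), hF _ (by omega) (by omega),
          hFne _ _ (by omega) hi.2 (by omega), Sym2.mem_mk_left _ _⟩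

end Leafless

section Cycles

variable {n : ℕ} (hn : 0 < n)

def cycleEdges (p : Equiv.Perm (Fin n)) : Finset (Sym2 (Fin n)) :=
  (Finset.range n).image (pathEdge hn p)

def hullEdge (k : ℕ) : Sym2 (Fin n) := pathEdge hn (Equiv.refl (Fin n)) k

def hullEdges : Finset (Sym2 (Fin n)) := cycleEdges hn (Equiv.refl (Fin n))

variable {hn} {p : Equiv.Perm (Fin n)}

lemma card_cycleEdges (h3 : 3 ≤ n) : (cycleEdges hn p).card = n := by
  rw [cycleEdges, Finset.card_image_of_injOn (by rw [Finset.coe_range]; exact pathEdge_injOn h3),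
    Finset.card_range]

lemma pathEdge_mem_cycleEdges (h2 : 2 ≤ n) (i : ℕ) : pathEdge hn p i ∈ cycleEdges hn p := by
  rw [← pathEdge_mod h2]
  exact Finset.mem_image_of_mem _ (Finset.mem_range.2 (Nat.mod_lt i hn))

lemma pathEdges_eq_cycleEdges_erase (h3 : 3 ≤ n) :
    pathEdges p = (cycleEdges hn p).erase (pathEdge hn p (n - 1)) := by
  have hlast : pathEdge hn p (n - 1) ∉ pathEdges p := by
    rw [mem_pathEdges_iff (hn := hn)]
    rintro ⟨i, hi, h⟩
    have := pathEdge_injOn h3 (show i < n by omega) (show n - 1 < n by omega) h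
    omega
  have hrange : Finset.range n = insert (n - 1) (Finset.range (n - 1)) := by
    rw [← Finset.range_add_one, Nat.sub_add_cancel (by omega)]
  rw [cycleEdges, hrange, Finset.image_insert, ← pathEdges_eq_image, Finset.erase_insert hlast]

lemma hullEdge_mem_hullEdges (h2 : 2 ≤ n) (k : ℕ) : hullEdge hn k ∈ hullEdges hn :=
  pathEdge_mem_cycleEdges h2 k

lemma hullEdge_injOn (h3 : 3 ≤ n) : Set.InjOn (hullEdge hn) (Set.Iio n) := pathEdge_injOn h3

lemma mem_hullEdges_iff (h2 : 2 ≤ n) {e : Sym2 (Fin n)} : e ∈ hullEdges hn ↔ IsHullEdge e := by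
  have hpt : ∀ a : Fin n, pt n hn a = a := fun a => Fin.ext (Nat.mod_eq_of_lt a.isLt)
  constructor
  · intro he
    obtain ⟨k, -, rfl⟩ := Finset.mem_image.1 he
    refine ⟨pt n hn k, pt n hn (k + 1), rfl, Or.inl ?_⟩
    simp only [pt]
    rw [Nat.add_mod k, Nat.mod_eq_of_lt (show 1 < n by omega)]
  · rintro ⟨a, b, rfl, h | h⟩
    · rw [congrArg₂ (fun x y => s(x, y)) (hpt a).symm (Fin.ext h.symm : b = pt n hn (a + 1))]
      exact hullEdge_mem_hullEdges h2 a.val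
    · rw [Sym2.eq_swap,
        congrArg₂ (fun x y => s(x, y)) (hpt b).symm (Fin.ext h.symm : a = pt n hn (b + 1))]
      exact hullEdge_mem_hullEdges h2 b.val

lemma card_hullEdges (h3 : 3 ≤ n) : (hullEdges hn).card = n := card_cycleEdges h3

end Cycles

lemma IsHullEdge.not_crosses {n : ℕ} {e f : Sym2 (Fin n)} (he : IsHullEdge e) :
    ¬ Crosses e f := by
  obtain ⟨a₀, b₀, rfl, hab₀⟩ := he
  rintro ⟨a, b, c, d, heq, rfl, hab, hcd, hac, had, hbc, hbd, hsep⟩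
  have hab' : (a.val + 1) % n = b.val ∨ (b.val + 1) % n = a.val := by
    rcases Sym2.eq_iff.1 heq with ⟨rfl, rfl⟩ | ⟨rfl, rfl⟩ <;> tauto
  simp only [Ne, Fin.ext_iff] at hab hac had hbc hbd
  have := a.isLt; have := b.isLt; have := c.isLt; have := d.isLt
  rcases hab' with h | h <;>
    rw [mod_eq_ite_of_lt_two_mul (by omega)] at h <;>
    rw [add_sub_mod_eq_ite a.isLt c.isLt, add_sub_mod_eq_ite a.isLt d.isLt,
      add_sub_mod_eq_ite a.isLt b.isLt] at hsep <;>
    split_ifs at hsep h <;> omega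

lemma exists_ne_succ_of_ne {f : ℕ → Bool} {a b : ℕ} (h : f a ≠ f b) :
    ∃ t, min a b ≤ t ∧ t < max a b ∧ f t ≠ f (t + 1) := by
  wlog hab : a ≤ b generalizing a b
  · simpa [min_comm, max_comm] using this (Ne.symm h) (by omega)
  rw [min_eq_left hab, max_eq_right hab]
  induction b, hab using Nat.le_induction with
  | base => exact absurd rfl h
  | succ b hab ih =>
    by_cases hb : f a = f b
    · exact ⟨b, hab, Nat.lt_succ_self b, hb ▸ h⟩
    · obtain ⟨t, hat, htb, ht⟩ := ih hb
      exact ⟨t, hat, by omega, ht⟩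

/-- How far `x` lies beyond `a` counterclockwise; `Crosses` is phrased in these terms. -/
def cyclicOffset {n : ℕ} (a x : Fin n) : ℕ := (x.val + n - a.val) % n

lemma cyclicOffset_self {n : ℕ} (a : Fin n) : cyclicOffset a a = 0 := by
  simp [cyclicOffset]

lemma cyclicOffset_pt_add {n : ℕ} (hn : 0 < n) (a : Fin n) {m : ℕ} (hm : m < n) :
    cyclicOffset a (pt n hn (a.val + m)) = m := by
  rw [cyclicOffset, pt, add_sub_mod_eq_ite a.isLt (Nat.mod_lt _ hn),
    mod_eq_ite_of_lt_two_mul (by omega)]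
  split_ifs <;> omega

lemma two_le_cyclicOffset_of_not_isHullEdge {n : ℕ} {a b : Fin n} (hab : a ≠ b)
    (h : ¬ IsHullEdge s(a, b)) : 2 ≤ cyclicOffset a b ∧ cyclicOffset a b + 2 ≤ n := by
  have h₁ : (a.val + 1) % n ≠ b.val := fun h' => h ⟨a, b, rfl, Or.inl h'⟩
  have h₂ : (b.val + 1) % n ≠ a.val := fun h' => h ⟨a, b, rfl, Or.inr h'⟩
  rw [Ne, Fin.ext_iff] at hab
  have := a.isLt; have := b.isLt
  rw [mod_eq_ite_of_lt_two_mul (by omega)] at h₁ h₂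
  rw [cyclicOffset, add_sub_mod_eq_ite a.isLt b.isLt]
  split_ifs at h₁ h₂ ⊢ <;> omega

section NoncrossingCycle

variable {n : ℕ} {hn : 0 < n} {p : Equiv.Perm (Fin n)}

lemma exists_pathVertex_eq_of_ne (j : ℕ) {x : Fin n} (hxa : x ≠ pathVertex hn p j)
    (hxb : x ≠ pathVertex hn p (j + 1)) : ∃ t, j + 1 < t ∧ t < j + n ∧ pathVertex hn p t = x := by
  have hs := (p.symm x).isLt
  have hj := Nat.mod_lt (j + 1) hn
  have hr := Nat.mod_lt ((p.symm x).val + n - (j + 1) % n) hn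
  set t := j + 1 + ((p.symm x).val + n - (j + 1) % n) % n
  have ht : pathVertex hn p t = x := by
    rw [eq_comm, eq_pathVertex_iff, Nat.add_mod, Nat.mod_mod, add_sub_mod_eq_ite hj hs,
      mod_eq_ite_of_lt_two_mul (by split_ifs <;> omega)]
    split_ifs <;> omega
  refine ⟨t, ?_, ?_, ht⟩
  · by_contra h
    exact hxb (by rw [← ht, show t = j + 1 by omega])
  · by_contra h
    exact hxa (by rw [← ht, pathVertex_eq_iff, show t = j + n by omega, Nat.add_mod_right])

lemma crosses_pathEdge {j t : ℕ} (hjt : j + 1 < t) (htj : t + 1 < j + n)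
    (hsep : let a := pathVertex hn p j
      cyclicOffset a (pathVertex hn p t) < cyclicOffset a (pathVertex hn p (j + 1)) ↔
        ¬ cyclicOffset a (pathVertex hn p (t + 1)) < cyclicOffset a (pathVertex hn p (j + 1))) :
    Crosses (pathEdge hn p j) (pathEdge hn p t) :=
  ⟨_, _, _, _, rfl, rfl, pathVertex_ne_of_lt (by omega) (by omega),
    pathVertex_ne_of_lt (by omega) (by omega), pathVertex_ne_of_lt (by omega) (by omega),
    pathVertex_ne_of_lt (by omega) (by omega), pathVertex_ne_of_lt (by omega) (by omega),
    pathVertex_ne_of_lt (by omega) (by omega), hsep⟩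

/-- If the chord `pathEdge j` had points on both sides, the rest of the tour, which runs from
one of its endpoints to the other through all these points, would have to cross it. -/
lemma isHullEdge_pathEdge (h2 : 2 ≤ n)
    (hNC : ∀ i t, ¬ Crosses (pathEdge hn p i) (pathEdge hn p t)) (j : ℕ) :
    IsHullEdge (pathEdge hn p j) := by
  by_contra hnh
  set a := pathVertex hn p j
  set k := cyclicOffset a (pathVertex hn p (j + 1))
  obtain ⟨hk, hkn⟩ : 2 ≤ k ∧ k + 2 ≤ n :=
    two_le_cyclicOffset_of_not_isHullEdge (pathVertex_ne_of_lt (by omega) (by omega)) hnh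
  have hvisit : ∀ m < n, m ≠ 0 → m ≠ k →
      ∃ t, j + 1 < t ∧ t < j + n ∧ cyclicOffset a (pathVertex hn p t) = m := by
    intro m hm hm₀ hmk
    have hoff := cyclicOffset_pt_add hn a hm
    obtain ⟨t, hjt, htj, ht⟩ := exists_pathVertex_eq_of_ne (p := p) j (x := pt n hn (a + m))
      (fun h => hm₀ (by rw [← hoff, h, cyclicOffset_self]))
      (fun h => hmk (by rw [← hoff, h]))
    exact ⟨t, hjt, htj, ht ▸ hoff⟩
  obtain ⟨t₀, ht₀, ht₀', hs₀⟩ := hvisit 1 (by omega) one_ne_zero (by omega)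
  obtain ⟨t₁, ht₁, ht₁', hs₁⟩ := hvisit (k + 1) (by omega) (by omega) (by omega)
  let side : ℕ → Bool := fun t => decide (cyclicOffset a (pathVertex hn p t) < k)
  obtain ⟨t, h₁, h₂, ht⟩ := exists_ne_succ_of_ne (f := side) (a := t₀) (b := t₁)
    (by simp only [side, hs₀, hs₁]; simp; omega)
  refine hNC j t (crosses_pathEdge (by omega) (by omega) ?_)
  simp only [side, ne_eq, decide_eq_decide] at ht
  tauto

lemma cycleEdges_eq_hullEdges (h3 : 3 ≤ n)
    (hNC : ∀ e ∈ cycleEdges hn p, ∀ f ∈ cycleEdges hn p, ¬ Crosses e f) :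
    cycleEdges hn p = hullEdges hn := by
  refine Finset.eq_of_subset_of_card_le (fun e he => ?_)
    (by rw [card_cycleEdges h3, card_hullEdges h3])
  obtain ⟨j, -, rfl⟩ := Finset.mem_image.1 he
  refine (mem_hullEdges_iff (by omega)).2 (isHullEdge_pathEdge (by omega) (fun i t => ?_) j)
  exact hNC _ (pathEdge_mem_cycleEdges (by omega) i) _ (pathEdge_mem_cycleEdges (by omega) t)

end NoncrossingCycle

section BoundaryPaths

variable {n : ℕ} (hn : 0 < n)

/-- The tour around the hull that starts at `k + 1` and ends at `k`. -/
def rotation (k : ℕ) : Equiv.Perm (Fin n) :=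
  haveI : NeZero n := ⟨hn.ne'⟩
  Equiv.addLeft (pt n hn (k + 1))

variable {hn}

lemma pathEdge_rotation (k i : ℕ) : pathEdge hn (rotation hn k) i = hullEdge hn (k + 1 + i) := by
  have hv : ∀ i, pathVertex hn (rotation hn k) i = pt n hn (k + 1 + i) := fun i => by
    have : NeZero n := ⟨hn.ne'⟩
    ext
    simp only [pathVertex, rotation, Equiv.coe_addLeft, Fin.val_add, pt, Nat.add_mod_mod,
      Nat.mod_add_mod]
  rw [pathEdge, hv, hv, hullEdge, pathEdge, Nat.add_assoc (k + 1) i 1]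
  rfl

lemma pathEdges_rotation (h3 : 3 ≤ n) (k : ℕ) :
    pathEdges (rotation hn k) = (hullEdges hn).erase (hullEdge hn k) := by
  have hcycle : cycleEdges hn (rotation hn k) = hullEdges hn := by
    refine Finset.eq_of_subset_of_card_le (fun e he => ?_) (by
      rw [card_cycleEdges h3, card_hullEdges h3])
    obtain ⟨i, -, rfl⟩ := Finset.mem_image.1 he
    rw [pathEdge_rotation]
    exact hullEdge_mem_hullEdges (by omega) _
  have hlast : pathEdge hn (rotation hn k) (n - 1) = hullEdge hn k := by
    rw [pathEdge_rotation, show k + 1 + (n - 1) = k + n by omega]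
    change pathEdge hn _ (k + n) = pathEdge hn _ k
    rw [← pathEdge_mod (by omega), Nat.add_mod_right, pathEdge_mod (by omega)]
  rw [pathEdges_eq_cycleEdges_erase (hn := hn) h3, hcycle, hlast]

variable (hn) in
def boundaryPath (h3 : 3 ≤ n) (k : ℕ) : PVert n :=
  ⟨(hullEdges hn).erase (hullEdge hn k), ⟨rotation hn k, (pathEdges_rotation h3 k).symm⟩,
    fun _ he _ _ => ((mem_hullEdges_iff (by omega)).1 (Finset.mem_of_mem_erase he)).not_crosses⟩

lemma isBoundary_iff_exists_eq_boundaryPath (h3 : 3 ≤ n) {w : PVert n} :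
    IsBoundary w ↔ ∃ k < n, w = boundaryPath hn h3 k := by
  constructor
  · intro hw
    have hsub : w.1 ⊆ hullEdges hn := fun e he => (mem_hullEdges_iff (by omega)).2 (hw e he)
    obtain ⟨⟨p, hp⟩, -⟩ := w.2
    have hcard : w.1.card = n - 1 := hp ▸ card_pathEdges h3
    obtain ⟨e, he, hew⟩ : ∃ e ∈ hullEdges hn, e ∉ w.1 := by
      by_contra! h
      have := Finset.card_le_card h
      rw [card_hullEdges h3] at this
      omega
    obtain ⟨k, hk, hke⟩ := Finset.mem_image.1 he
    change hullEdge hn k = e at hke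
    subst hke
    refine ⟨k, Finset.mem_range.1 hk, Subtype.ext ?_⟩
    refine Finset.eq_of_subset_of_card_le (fun x hx => Finset.mem_erase.2
      ⟨fun h => hew (h ▸ hx), hsub hx⟩) ?_
    change ((hullEdges hn).erase (hullEdge hn k)).card ≤ w.1.card
    rw [Finset.card_erase_of_mem he, card_hullEdges h3, hcard]
  · rintro ⟨k, -, rfl⟩ e he
    exact (mem_hullEdges_iff (by omega)).1 (Finset.mem_of_mem_erase he)

lemma boundaryPath_injOn (h3 : 3 ≤ n) : Set.InjOn (boundaryPath hn h3) (Set.Iio n) :=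
  fun k hk k' hk' h => hullEdge_injOn h3 hk hk'
    ((Finset.erase_inj _ (hullEdge_mem_hullEdges (by omega) k)).1 (congrArg Subtype.val h))

lemma ncard_setOf_isBoundary (h3 : 3 ≤ n) : {w : PVert n | IsBoundary w}.ncard = n := by
  have hn : 0 < n := by omega
  have hrange : {w : PVert n | IsBoundary w} = Set.range fun k : Fin n => boundaryPath hn h3 k := by
    ext w
    change IsBoundary w ↔ _
    rw [isBoundary_iff_exists_eq_boundaryPath (hn := hn) h3, Set.mem_range]
    exact ⟨fun ⟨k, hk, hw⟩ => ⟨⟨k, hk⟩, hw.symm⟩, fun ⟨k, hw⟩ => ⟨k, k.isLt, hw.symm⟩⟩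
  rw [hrange, Set.ncard_range_of_injective, Nat.card_eq_fintype_card, Fintype.card_fin]
  exact fun k k' h => Fin.ext (boundaryPath_injOn h3 k.isLt k'.isLt h)

lemma unionClique_eq_setOf_isBoundary (h3 : 3 ≤ n) {u v : PVert n}
    (huv : u.1 ∪ v.1 = hullEdges hn) : unionClique u v = {w | IsBoundary w} := by
  ext w
  change (∃ e ∈ u.1 ∪ v.1, _) ↔ IsBoundary w
  rw [isBoundary_iff_exists_eq_boundaryPath (hn := hn) h3, huv]
  constructor
  · rintro ⟨e, he, hw⟩
    obtain ⟨k, hk, rfl⟩ := Finset.mem_image.1 he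
    exact ⟨k, Finset.mem_range.1 hk, Subtype.ext hw⟩
  · rintro ⟨k, -, rfl⟩
    exact ⟨_, hullEdge_mem_hullEdges (by omega) k, rfl⟩

lemma adj_boundaryPath_zero_one (h3 : 3 ≤ n) :
    (pathGraph n).Adj (boundaryPath hn h3 0) (boundaryPath hn h3 1) ∧
      (boundaryPath hn h3 0).1 ∪ (boundaryPath hn h3 1).1 = hullEdges hn := by
  have h01 : hullEdge hn 0 ≠ hullEdge hn 1 := fun h => by
    have := hullEdge_injOn h3 (show 0 < n by omega) (show 1 < n by omega) h
    omega
  have hmem := hullEdge_mem_hullEdges (hn := hn) (by omega)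
  have hne : boundaryPath hn h3 0 ≠ boundaryPath hn h3 1 := fun h => by
    simpa using boundaryPath_injOn h3 (show 0 < n by omega) (show 1 < n by omega) h
  refine ⟨⟨hne, ?_⟩, ?_⟩
  · simp only [boundaryPath]
    rw [Finset.erase_sdiff_erase h01 (hmem 1), Finset.erase_sdiff_erase h01.symm (hmem 0),
      Finset.card_union_of_disjoint (by simpa using h01.symm), Finset.card_singleton,
      Finset.card_singleton]
  · ext e
    simp only [boundaryPath, Finset.mem_union, Finset.mem_erase]
    by_cases he : e = hullEdge hn 0 <;> simp [he, h01]

end BoundaryPaths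

section ChordCycle

variable {n : ℕ} {hn : 0 < n} {p : Equiv.Perm (Fin n)}

lemma lt_of_pathEdge_mem_chordCycle {a b i : ℕ} (hab : a + 2 ≤ b) (hb : b < n) (hi : i + 1 < n)
    (h : pathEdge hn p i ∈ chordCycle hn p a b) : a ≤ i ∧ i < b := by
  rcases Finset.mem_insert.1 h with h | h
  · exact absurd h.symm (chord_ne_pathEdge hab hb hi)
  · obtain ⟨j, hj, hji⟩ := Finset.mem_image.1 h
    rw [Finset.mem_Ico] at hj
    rw [← pathEdge_injOn (by omega) (show j < n by omega) (show i < n by omega) hji]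
    exact hj

lemma mem_of_erase_eq_pathEdges_of_isLeafless {U C : Finset (Sym2 (Fin n))} {e : Sym2 (Fin n)}
    {q : Equiv.Perm (Fin n)} (hCU : C ⊆ U) (hC : C.Nonempty) (hleaf : IsLeafless C)
    (hq : U.erase e = pathEdges q) : e ∈ C := by
  by_contra he
  refine not_subset_pathEdges_of_isLeafless (p := q) hC hleaf fun c hc => ?_
  rw [← hq]
  exact Finset.mem_erase.2 ⟨fun h => he (h ▸ hc), hCU hc⟩

lemma mem_of_erase_eq_pathEdges_of_two_lt_degIn {U : Finset (Sym2 (Fin n))} {e : Sym2 (Fin n)}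
    {x : Fin n} {q : Equiv.Perm (Fin n)} (hx : 2 < degIn U x) (hq : U.erase e = pathEdges q) :
    x ∈ e := by
  by_contra hxe
  have : degIn (U.erase e) x = degIn U x := by
    rw [degIn, degIn, Finset.filter_erase, Finset.erase_eq_of_notMem (by simp [hxe])]
  have := degIn_pathEdges_le_two (p := q) x
  rw [← hq] at this
  omega

/-- The chord closes `chordCycle` and has an endpoint `m` inside the path, of degree three in
the union. A deletion that leaves a path must break the cycle and lower that degree, and of the
two path edges at `m` only one lies on the cycle. -/
lemma eq_of_insert_chord_erase_eq_pathEdges {a b : ℕ} (hab : a + 2 ≤ b) (hb : b < n)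
    (hend : 0 < a ∨ b + 1 < n) {e e' : Sym2 (Fin n)} (he : e ∈ pathEdges p)
    (he' : e' ∈ pathEdges p) {q q' : Equiv.Perm (Fin n)}
    (hq : (insert s(pathVertex hn p a, pathVertex hn p b) (pathEdges p)).erase e = pathEdges q)
    (hq' : (insert s(pathVertex hn p a, pathVertex hn p b) (pathEdges p)).erase e' =
      pathEdges q') :
    e = e' := by
  set g := s(pathVertex hn p a, pathVertex hn p b)
  set U := insert g (pathEdges p)
  set C := chordCycle hn p a b
  have hCU : C ⊆ U := Finset.insert_subset_insert _ fun c hc => by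
    obtain ⟨i, hi, rfl⟩ := Finset.mem_image.1 hc
    exact pathEdge_mem_pathEdges (by simp at hi; omega)
  obtain ⟨m, hm, hmn, hxg, hoff⟩ : ∃ m, 0 < m ∧ m + 1 < n ∧ pathVertex hn p m ∈ g ∧
      (pathEdge hn p (m - 1) ∉ C ∨ pathEdge hn p m ∉ C) := by
    rcases hend with ha | hb'
    · exact ⟨a, ha, by omega, Sym2.mem_mk_left _ _, Or.inl fun h => by
        have := lt_of_pathEdge_mem_chordCycle hab hb (by omega) h; omega⟩
    · exact ⟨b, by omega, hb', Sym2.mem_mk_right _ _, Or.inr fun h => by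
        have := lt_of_pathEdge_mem_chordCycle hab hb hb' h; omega⟩
  have hdeg : 2 < degIn U (pathVertex hn p m) := three_le_degIn (Finset.mem_insert_self g _)
    (Finset.mem_insert_of_mem (pathEdge_mem_pathEdges (by omega)))
    (Finset.mem_insert_of_mem (pathEdge_mem_pathEdges hmn)) hxg
    (pathVertex_mem_pathEdge_sub_one hm) (Sym2.mem_mk_left _ _)
    (chord_ne_pathEdge hab hb (by omega)) (chord_ne_pathEdge hab hb hmn)
    (fun h => by
      have := pathEdge_injOn (by omega) (show m - 1 < n by omega) (show m < n by omega) h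
      omega)
  have key : ∀ e ∈ pathEdges p, ∀ q : Equiv.Perm (Fin n), U.erase e = pathEdges q →
      e ∈ C ∧ (e = pathEdge hn p (m - 1) ∨ e = pathEdge hn p m) := fun e he q hq =>
    ⟨mem_of_erase_eq_pathEdges_of_isLeafless hCU ⟨g, Finset.mem_insert_self _ _⟩
      (isLeafless_chordCycle hab hb) hq,
      eq_pathEdge_of_mem he (by omega) (mem_of_erase_eq_pathEdges_of_two_lt_degIn hdeg hq)⟩
  obtain ⟨hC, h⟩ := key e he q hq
  obtain ⟨hC', h'⟩ := key e' he' q' hq'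
  rcases h with rfl | rfl <;> rcases h' with rfl | rfl <;> tauto

end ChordCycle

lemma union_erase_eq_of_sdiff_eq_singleton {α : Type*} [DecidableEq α] {s t : Finset α}
    {e : α} (h : s \ t = {e}) : (s ∪ t).erase e = t := by
  rw [Finset.union_comm, ← Finset.union_sdiff_self_eq_union, h, Finset.union_singleton,
    Finset.erase_insert (Finset.mem_sdiff.1 (h ▸ Finset.mem_singleton_self e)).2]

lemma exists_eq_chord {n : ℕ} (hn : 0 < n) (p : Equiv.Perm (Fin n)) {g : Sym2 (Fin n)}
    (hg : ¬ g.IsDiag) : ∃ a b, a < b ∧ b < n ∧ g = s(pathVertex hn p a, pathVertex hn p b) := by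
  induction g using Sym2.ind with | h x y => ?_
  have hx : x = pathVertex hn p (p.symm x) := by
    rw [eq_pathVertex_iff, Nat.mod_eq_of_lt (p.symm x).isLt]
  have hy : y = pathVertex hn p (p.symm y) := by
    rw [eq_pathVertex_iff, Nat.mod_eq_of_lt (p.symm y).isLt]
  rcases lt_trichotomy (p.symm x).val (p.symm y).val with h | h | h
  · exact ⟨_, _, h, (p.symm y).isLt, by rw [← hx, ← hy]⟩
  · exact absurd (Sym2.mk_isDiag_iff.2 (p.symm.injective (Fin.ext h))) hg
  · exact ⟨_, _, h, (p.symm x).isLt, by rw [← hx, ← hy, Sym2.eq_swap]⟩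

section UnionClique

variable {n : ℕ}

lemma card_sdiff_eq_one_of_adj (h3 : 3 ≤ n) {u v : PVert n} (h : (pathGraph n).Adj u v) :
    (u.1 \ v.1).card = 1 := by
  obtain ⟨⟨p, hp⟩, -⟩ := u.2
  obtain ⟨⟨q, hq⟩, -⟩ := v.2
  have hcomm := Finset.card_sdiff_comm (s := u.1) (t := v.1) (by rw [hp, hq,
    card_pathEdges h3, card_pathEdges h3])
  have := h.2
  rw [Finset.card_union_of_disjoint disjoint_sdiff_sdiff] at this
  omega

lemma unionClique_eq_pair (h3 : 3 ≤ n) {u v : PVert n} (h : (pathGraph n).Adj u v)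
    (hno : ∀ e ∈ u.1 ∩ v.1, ¬ IsNCPath ((u.1 ∪ v.1).erase e)) : unionClique u v = {u, v} := by
  obtain ⟨f, hf⟩ := Finset.card_eq_one.1 (card_sdiff_eq_one_of_adj h3 h)
  obtain ⟨g, hg⟩ := Finset.card_eq_one.1 (card_sdiff_eq_one_of_adj h3 h.symm)
  have hfu := Finset.mem_sdiff.1 (hf ▸ Finset.mem_singleton_self f)
  have hgv := Finset.mem_sdiff.1 (hg ▸ Finset.mem_singleton_self g)
  have hv : (u.1 ∪ v.1).erase f = v.1 := union_erase_eq_of_sdiff_eq_singleton hf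
  have hu : (u.1 ∪ v.1).erase g = u.1 := by
    rw [Finset.union_comm]
    exact union_erase_eq_of_sdiff_eq_singleton hg
  ext w
  simp only [Set.mem_insert_iff, Set.mem_singleton_iff]
  constructor
  · rintro ⟨e, he, hw⟩
    by_cases hi : e ∈ u.1 ∩ v.1
    · exact absurd (hw ▸ w.2) (hno e hi)
    rw [Finset.mem_inter] at hi
    rcases Finset.mem_union.1 he with he | he
    · obtain rfl : e = f :=
        Finset.mem_singleton.1 (hf ▸ Finset.mem_sdiff.2 ⟨he, fun h => hi ⟨he, h⟩⟩)
      exact Or.inr (Subtype.ext (hw.trans hv))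
    · obtain rfl : e = g :=
        Finset.mem_singleton.1 (hg ▸ Finset.mem_sdiff.2 ⟨he, fun h => hi ⟨h, he⟩⟩)
      exact Or.inl (Subtype.ext (hw.trans hu))
  · rintro (rfl | rfl)
    · exact ⟨g, Finset.mem_union_right _ hgv.1, hu.symm⟩
    · exact ⟨f, Finset.mem_union_left _ hfu.1, hv.symm⟩

/-- A crossing pair in `s ∪ t` has one edge in each of `s \ t` and `t \ s`, so it survives the
deletion of a common edge. -/
lemma not_noncrossing_union_erase {s t : Finset (Sym2 (Fin n))}
    (hs : ∀ e ∈ s, ∀ f ∈ s, ¬ Crosses e f) (ht : ∀ e ∈ t, ∀ f ∈ t, ¬ Crosses e f)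
    {e₁ e₂ e : Sym2 (Fin n)} (h₁ : e₁ ∈ s ∪ t) (h₂ : e₂ ∈ s ∪ t) (hc : Crosses e₁ e₂)
    (he : e ∈ s ∩ t) : ¬ ∀ x ∈ (s ∪ t).erase e, ∀ y ∈ (s ∪ t).erase e, ¬ Crosses x y := by
  rw [Finset.mem_union] at h₁ h₂
  rw [Finset.mem_inter] at he
  intro hNC
  refine hNC e₁ (Finset.mem_erase.2 ⟨?_, Finset.mem_union.2 h₁⟩) e₂
    (Finset.mem_erase.2 ⟨?_, Finset.mem_union.2 h₂⟩) hc
  · rintro rfl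
    rcases h₂ with h₂ | h₂
    exacts [hs _ he.1 _ h₂ hc, ht _ he.2 _ h₂ hc]
  · rintro rfl
    rcases h₁ with h₁ | h₁
    exacts [hs _ h₁ _ he.1 hc, ht _ h₁ _ he.2 hc]

lemma insert_pathEdges_eq_cycleEdges {hn : 0 < n} (h3 : 3 ≤ n) (p : Equiv.Perm (Fin n)) :
    insert s(pathVertex hn p 0, pathVertex hn p (n - 1)) (pathEdges p) = cycleEdges hn p := by
  have hclose : s(pathVertex hn p 0, pathVertex hn p (n - 1)) = pathEdge hn p (n - 1) := by
    rw [pathEdge, Sym2.eq_swap, Nat.sub_add_cancel (by omega),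
      pathVertex_eq_iff.2 (show 0 % n = n % n by simp)]
  rw [hclose, pathEdges_eq_cycleEdges_erase (hn := hn) h3,
    Finset.insert_erase (pathEdge_mem_cycleEdges (by omega) _)]

lemma exists_union_eq_insert_chord {hn : 0 < n} (h3 : 3 ≤ n) {u v : PVert n}
    (h : (pathGraph n).Adj u v) {p : Equiv.Perm (Fin n)} (hp : u.1 = pathEdges p) :
    ∃ a b, a + 2 ≤ b ∧ b < n ∧
      u.1 ∪ v.1 = insert s(pathVertex hn p a, pathVertex hn p b) (pathEdges p) := by
  obtain ⟨⟨q, hq⟩, -⟩ := v.2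
  obtain ⟨g, hg⟩ := Finset.card_eq_one.1 (card_sdiff_eq_one_of_adj h3 h.symm)
  have hgv : g ∈ v.1 ∧ g ∉ u.1 := Finset.mem_sdiff.1 (hg ▸ Finset.mem_singleton_self g)
  have hdiag : ¬ g.IsDiag := by
    obtain ⟨i, -, hi⟩ := (mem_pathEdges_iff (hn := hn)).1 (hq ▸ hgv.1)
    exact hi ▸ not_isDiag_pathEdge (by omega) i
  obtain ⟨a, b, hab, hb, rfl⟩ := exists_eq_chord hn p hdiag
  refine ⟨a, b, ?_, hb, by rw [← Finset.union_sdiff_self_eq_union, hg, Finset.union_singleton, hp]⟩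
  by_contra hab₂
  refine hgv.2 (hp ▸ ?_)
  rw [show b = a + 1 by omega]
  exact pathEdge_mem_pathEdges (by omega)

lemma not_isNCPath_union_erase {hn : 0 < n} (h3 : 3 ≤ n) {u v : PVert n}
    (h : (pathGraph n).Adj u v) (hU : u.1 ∪ v.1 ≠ hullEdges hn) {e : Sym2 (Fin n)}
    (he : e ∈ u.1 ∩ v.1) : ¬ IsNCPath ((u.1 ∪ v.1).erase e) := by
  rintro ⟨⟨q, hq⟩, hNC⟩
  obtain ⟨⟨p, hp⟩, -⟩ := u.2
  obtain ⟨a, b, hab, hb, hUg⟩ := exists_union_eq_insert_chord (hn := hn) h3 h hp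
  by_cases hham : a = 0 ∧ b = n - 1
  · obtain ⟨rfl, rfl⟩ := hham
    rw [insert_pathEdges_eq_cycleEdges h3] at hUg
    obtain ⟨e₁, he₁, e₂, he₂, hc⟩ :
        ∃ e₁ ∈ u.1 ∪ v.1, ∃ e₂ ∈ u.1 ∪ v.1, Crosses e₁ e₂ := by
      by_contra! hall
      exact hU (hUg.trans (cycleEdges_eq_hullEdges h3 (hUg ▸ hall)))
    exact not_noncrossing_union_erase u.2.2 v.2.2 he₁ he₂ hc he hNC
  · obtain ⟨f, hf⟩ := Finset.card_eq_one.1 (card_sdiff_eq_one_of_adj h3 h)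
    have hfu : f ∈ u.1 ∧ f ∉ v.1 := Finset.mem_sdiff.1 (hf ▸ Finset.mem_singleton_self f)
    obtain ⟨⟨p', hp'⟩, -⟩ := v.2
    have hvf : (u.1 ∪ v.1).erase f = pathEdges p' := by
      rw [union_erase_eq_of_sdiff_eq_singleton hf, hp']
    rw [hUg] at hq hvf
    have hef := eq_of_insert_chord_erase_eq_pathEdges hab hb (by omega)
      (hp ▸ (Finset.mem_inter.1 he).1) (hp ▸ hfu.1) hq hvf
    exact hfu.2 (hef ▸ (Finset.mem_inter.1 he).2)

end UnionClique

/-- Among the union max-cliques of `G(P)` (`n ≥ 5`), all have size 2 except for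
exactly one, of size `n`, whose vertices are precisely the `n` boundary paths. -/
theorem unionClique_card (n : ℕ) (hn : 5 ≤ n) :
    (∀ u v : PVert n, (pathGraph n).Adj u v →
      (unionClique u v).ncard = 2 ∨
      (unionClique u v = {w : PVert n | IsBoundary w} ∧
        {w : PVert n | IsBoundary w}.ncard = n)) ∧
    (∃ u v : PVert n, (pathGraph n).Adj u v ∧
      unionClique u v = {w : PVert n | IsBoundary w}) := by
  have hn₀ : 0 < n := by omega
  have h3 : 3 ≤ n := by omega
  refine ⟨fun u v h => ?_, ?_⟩
  · by_cases hU : u.1 ∪ v.1 = hullEdges hn₀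
    · exact Or.inr ⟨unionClique_eq_setOf_isBoundary h3 hU, ncard_setOf_isBoundary h3⟩
    · left
      rw [unionClique_eq_pair h3 h fun e he => not_isNCPath_union_erase h3 h hU he]
      exact Set.ncard_pair h.1
  · obtain ⟨h, hU⟩ := adj_boundaryPath_zero_one (hn := hn₀) h3
    exact ⟨_, _, h, unionClique_eq_setOf_isBoundary h3 hU⟩

end PG
end

section
/- If the vertices of a convex point set P are partitioned into k ≥ 2 consecutive arcs giving boundary paths P_1, ..., P_k, and v is a non-crossing spanning path with hull-edge set exactly P_1 ∪ ... ∪ P_k, then fixing which endpoint of which non-degenerate P_i is an endpoint of v determines v uniquely; moreover, a degenerate (single-vertex) P_i cannot contain an endpoint of v. -/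
namespace PG

/-!
Along a non-crossing spanning path of a convex polygon, the vertices visited so far always form
a cyclic arc, and the next vertex is one of the two neighbours of that arc: otherwise the new edge
would separate those two neighbours, and the rest of the path, which has to visit both, would
cross it. The current vertex is an end of the arc, so stepping to its outer neighbour uses a hull
edge, while stepping to the neighbour beyond the other end uses a diagonal (unless a single vertex
is left). Hence the hull edges of the path decide every step, and a path is determined by its
hull edges and a starting endpoint. At the first step both choices are hull edges, so every
endpoint lies on a hull edge.
-/

open Equiv Fin.NatCast

lemma exists_flip_between (f : ℕ → Prop) {s e : ℕ} (h : f s ↔ ¬ f e) :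
    ∃ t, min s e ≤ t ∧ t < max s e ∧ (f t ↔ ¬ f (t + 1)) := by
  wlog hse : s ≤ e generalizing s e
  · obtain ⟨t, ht⟩ := this (by tauto) (le_of_not_ge hse)
    exact ⟨t, by rwa [min_comm, max_comm]⟩
  rw [min_eq_left hse, max_eq_right hse]
  induction e, hse using Nat.le_induction with
  | base => exact absurd h iff_not_self
  | succ e hse ih =>
    by_cases hflip : f e ↔ ¬ f (e + 1)
    · exact ⟨e, hse, e.lt_succ_self, hflip⟩
    · obtain ⟨t, hst, hte, ht⟩ := ih (by tauto)
      exact ⟨t, hst, hte.trans e.lt_succ_self, ht⟩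

variable {n : ℕ}

lemma val_add_sub_mod (x y : Fin n) : (x.val + n - y.val) % n = (x - y).val := by
  rw [Fin.val_sub]; congr 1; have := y.isLt; omega

def NonCrossing (E : Finset (Sym2 (Fin n))) : Prop := ∀ e ∈ E, ∀ f ∈ E, ¬ Crosses e f

variable [NeZero n]

lemma val_sub_left_inj {x y a : Fin n} : (x - a).val = (y - a).val ↔ x = y :=
  Fin.val_inj.trans sub_left_inj

lemma val_sub_eq_zero_iff {x a : Fin n} : (x - a).val = 0 ↔ x = a := by
  rw [Fin.val_eq_zero_iff, sub_eq_zero]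

lemma exists_val_sub_eq (a : Fin n) {m : ℕ} (hm : m < n) : ∃ x : Fin n, (x - a).val = m :=
  ⟨a + (m : Fin n), by rw [add_sub_cancel_left, Fin.val_cast_of_lt hm]⟩

lemma val_sub_add_val_sub {x y : Fin n} (h : x ≠ y) : (x - y).val + (y - x).val = n := by
  rw [← neg_sub x y, Fin.val_neg, if_neg (sub_ne_zero.mpr h)]
  have := (x - y).isLt
  omega

lemma val_sub_eq_sub_of_le {x y a : Fin n} (h : (y - a).val ≤ (x - a).val) :
    (x - y).val = (x - a).val - (y - a).val := by
  rw [← sub_sub_sub_cancel_right x y a]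
  exact Fin.coe_sub_iff_le.mpr h

lemma isHullEdge_of_val_sub {x y : Fin n} (hxy : x ≠ y)
    (h : (y - x).val = 1 ∨ (y - x).val = n - 1) : IsHullEdge s(x, y) := by
  refine ⟨x, y, rfl, h.imp (fun h => ?_) (fun h => ?_)⟩
  · rw [← h, ← Fin.val_add, add_sub_cancel]
  · have hyx : (x - y).val = 1 := by have := val_sub_add_val_sub hxy; omega
    rw [← hyx, ← Fin.val_add, add_sub_cancel]

lemma crosses_of_val_sub_lt {a u v c w : Fin n} (huv : (u - a).val < (v - a).val)
    (hvc : (v - a).val < (c - a).val) (hcw : (c - a).val < (w - a).val) :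
    Crosses s(u, c) s(v, w) := by
  have ne {x y : Fin n} (h : (x - a).val < (y - a).val) : x ≠ y := by
    rintro rfl; exact h.false
  refine ⟨u, c, v, w, rfl, rfl, ne (huv.trans hvc), ne (hvc.trans hcw), ne huv,
    ne (huv.trans (hvc.trans hcw)), (ne hvc).symm, ne hcw, ?_⟩
  rw [val_add_sub_mod, val_add_sub_mod, val_add_sub_mod, val_sub_eq_sub_of_le (x := v) huv.le,
    val_sub_eq_sub_of_le (x := c) (huv.trans hvc).le,
    val_sub_eq_sub_of_le (x := w) (huv.trans (hvc.trans hcw)).le]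
  omega

def vertex (p : Perm (Fin n)) (j : ℕ) : Fin n := p j

lemma eq_of_vertex_eq (p : Perm (Fin n)) {j k : ℕ} (hj : j < n) (hk : k < n)
    (h : vertex p j = vertex p k) : j = k := by
  have := congrArg Fin.val (p.injective h)
  rwa [Fin.val_cast_of_lt hj, Fin.val_cast_of_lt hk] at this

lemma exists_vertex_eq (p : Perm (Fin n)) (x : Fin n) : ∃ j < n, vertex p j = x :=
  ⟨(p.symm x).val, (p.symm x).isLt, by
    rw [vertex, Fin.cast_val_eq_self, Equiv.apply_symm_apply]⟩

lemma mem_pathEdges {p : Perm (Fin n)} {e : Sym2 (Fin n)} :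
    e ∈ pathEdges p ↔ ∃ t, t + 1 < n ∧ e = s(vertex p t, vertex p (t + 1)) := by
  simp only [pathEdges, Finset.mem_filter, Finset.mem_univ, true_and]
  constructor
  · rintro ⟨i, j, rfl, hij⟩
    refine ⟨i, hij ▸ j.isLt, ?_⟩
    rw [vertex, vertex, ← hij, Fin.cast_val_eq_self, Fin.cast_val_eq_self]
  · rintro ⟨t, ht, rfl⟩
    refine ⟨⟨t, by omega⟩, ⟨t + 1, ht⟩, ?_, rfl⟩
    rw [vertex, vertex, Fin.natCast_eq_mk, Fin.natCast_eq_mk ht]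

lemma one_lt_of_degIn_ne_zero {p : Perm (Fin n)} {x : Fin n} (hx : degIn (pathEdges p) x ≠ 0) :
    1 < n := by
  obtain ⟨e, he⟩ := Finset.card_ne_zero.mp hx
  obtain ⟨t, ht, -⟩ := mem_pathEdges.mp (Finset.mem_filter.mp he).1
  omega

lemma two_le_degIn_vertex (p : Perm (Fin n)) {m : ℕ} (hm0 : 0 < m) (hm : m + 1 < n) :
    2 ≤ degIn (pathEdges p) (vertex p m) := by
  have hne : s(vertex p (m - 1), vertex p m) ≠ s(vertex p m, vertex p (m + 1)) := by
    intro h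
    rcases Sym2.eq_iff.mp h with ⟨h, -⟩ | ⟨h, -⟩ <;>
      have := eq_of_vertex_eq p (by omega) (by omega) h <;> omega
  calc 2 = ({s(vertex p (m - 1), vertex p m), s(vertex p m, vertex p (m + 1))} :
        Finset (Sym2 (Fin n))).card := (Finset.card_pair hne).symm
    _ ≤ degIn (pathEdges p) (vertex p m) := by
      refine Finset.card_le_card fun e he => Finset.mem_filter.mpr ?_
      rcases Finset.mem_insert.mp he with rfl | he
      · refine ⟨mem_pathEdges.mpr ⟨m - 1, by omega, ?_⟩, Sym2.mem_mk_right _ _⟩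
        rw [Nat.sub_add_cancel hm0]
      · rw [Finset.mem_singleton.mp he]
        exact ⟨mem_pathEdges.mpr ⟨m, hm, rfl⟩, Sym2.mem_mk_left _ _⟩

lemma vertex_revPerm_trans (p : Perm (Fin n)) {j : ℕ} (hj : j < n) :
    vertex (Fin.revPerm.trans p) j = vertex p (n - 1 - j) := by
  simp only [vertex, Equiv.trans_apply, Fin.revPerm_apply]
  congr 1
  ext
  rw [Fin.val_rev, Fin.val_cast_of_lt hj, Fin.val_cast_of_lt (by omega)]
  omega

lemma pathEdges_revPerm_trans_subset (p : Perm (Fin n)) :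
    pathEdges (Fin.revPerm.trans p) ⊆ pathEdges p := by
  intro e he
  obtain ⟨t, ht, rfl⟩ := mem_pathEdges.mp he
  refine mem_pathEdges.mpr ⟨n - 2 - t, by omega, ?_⟩
  rw [vertex_revPerm_trans p (by omega), vertex_revPerm_trans p ht, Sym2.eq_swap,
    show n - 1 - t = n - 2 - t + 1 by omega, show n - 1 - (t + 1) = n - 2 - t by omega]

lemma pathEdges_revPerm_trans (p : Perm (Fin n)) :
    pathEdges (Fin.revPerm.trans p) = pathEdges p :=
  (pathEdges_revPerm_trans_subset p).antisymm <| by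
    have hrev : Fin.revPerm.trans (Fin.revPerm.trans p) = p := Equiv.ext fun x => by simp
    simpa only [hrev] using pathEdges_revPerm_trans_subset (Fin.revPerm.trans p)

lemma exists_pathEdges_eq_vertex_zero_eq (p : Perm (Fin n)) {x : Fin n}
    (hx : degIn (pathEdges p) x = 1) :
    ∃ q : Perm (Fin n), pathEdges q = pathEdges p ∧ vertex q 0 = x := by
  obtain ⟨m, hm, rfl⟩ := exists_vertex_eq p x
  rcases Nat.eq_zero_or_pos m with rfl | hm0
  · exact ⟨p, rfl, rfl⟩
  by_cases hlast : m + 1 = n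
  · refine ⟨Fin.revPerm.trans p, pathEdges_revPerm_trans p, ?_⟩
    rw [vertex_revPerm_trans p (NeZero.pos n)]
    congr 1
    omega
  · have := two_le_degIn_vertex p hm0 (by omega)
    omega

lemma PVert.exists_perm_vertex_zero_eq (w : PVert n) {x : Fin n} (hx : degIn w.1 x = 1) :
    ∃ p : Perm (Fin n), w.1 = pathEdges p ∧ NonCrossing (pathEdges p) ∧ vertex p 0 = x := by
  obtain ⟨⟨p, hp⟩, hNC⟩ := w.2
  rw [hp] at hx hNC
  obtain ⟨q, hq, hq0⟩ := exists_pathEdges_eq_vertex_zero_eq p hx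
  exact ⟨q, hp.trans hq.symm, hq ▸ hNC, hq0⟩

/-- The first `i + 1` vertices of `p` are the cyclic arc `a, a + 1, …, a + i`, and the `i`-th
one is an end of it. -/
def IsArcPrefix (p : Perm (Fin n)) (a : Fin n) (i : ℕ) : Prop :=
  (∀ x, (x - a).val ≤ i ↔ ∃ j ≤ i, vertex p j = x) ∧
    ((vertex p i - a).val = 0 ∨ (vertex p i - a).val = i)

namespace IsArcPrefix

variable {p r : Perm (Fin n)} {a : Fin n} {i : ℕ}

lemma zero (p : Perm (Fin n)) : IsArcPrefix p (vertex p 0) 0 := by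
  refine ⟨fun x => ?_, Or.inl (by rw [sub_self, Fin.val_zero])⟩
  simp only [Nat.le_zero, val_sub_eq_zero_iff, exists_eq_left]
  exact eq_comm

lemma val_sub_le (h : IsArcPrefix p a i) {j : ℕ} (hj : j ≤ i) : (vertex p j - a).val ≤ i :=
  (h.1 _).2 ⟨j, hj, rfl⟩

lemma lt_val_sub (h : IsArcPrefix p a i) {t : ℕ} (hit : i < t) (ht : t < n) :
    i < (vertex p t - a).val := by
  by_contra! hle
  obtain ⟨j, hj, hjt⟩ := (h.1 _).1 hle
  have := eq_of_vertex_eq p (by omega) ht hjt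
  omega

lemma congr (h : IsArcPrefix p a i) (hpr : ∀ j ≤ i, vertex p j = vertex r j) :
    IsArcPrefix r a i :=
  ⟨fun x => (h.1 x).trans (exists_congr fun j => and_congr_right fun hj => by rw [hpr j hj]),
    hpr i le_rfl ▸ h.2⟩

lemma next (h : IsArcPrefix p a i) (hp : NonCrossing (pathEdges p)) (hi : i + 1 < n) :
    (vertex p (i + 1) - a).val = i + 1 ∨ (vertex p (i + 1) - a).val = n - 1 := by
  set c := vertex p (i + 1)
  have hc : i < (c - a).val := h.lt_val_sub i.lt_succ_self hi
  by_contra! hne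
  have hcn := (c - a).isLt
  have later {t : ℕ} (ht : t < n) (hit : i + 1 < t) :
      i < (vertex p t - a).val ∧ (vertex p t - a).val ≠ (c - a).val :=
    ⟨h.lt_val_sub (by omega) ht,
      fun htc => by have := eq_of_vertex_eq p ht hi (val_sub_left_inj.mp htc); omega⟩
  have visited_late {t : ℕ} (ht : t < n) (hit : i < (vertex p t - a).val)
      (htc : (vertex p t - a).val ≠ (c - a).val) : i + 1 < t := by
    by_contra! hle
    rcases Nat.lt_or_eq_of_le hle with hle | rfl
    · exact (h.val_sub_le (Nat.le_of_lt_succ hle)).not_gt hit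
    · exact htc rfl
  -- The two neighbours of the arc lie on opposite sides of the chord from `p i` to `c` and are
  -- visited later, so some later edge crosses that chord.
  obtain ⟨x₁, hx₁⟩ := exists_val_sub_eq a hi
  obtain ⟨x₂, hx₂⟩ := exists_val_sub_eq a (show n - 1 < n by omega)
  obtain ⟨t₁, ht₁, rfl⟩ := exists_vertex_eq p x₁
  obtain ⟨t₂, ht₂, rfl⟩ := exists_vertex_eq p x₂
  have h₁ := visited_late ht₁ (by omega) (by omega)
  have h₂ := visited_late ht₂ (by omega) (by omega)
  obtain ⟨t, ht₁₂, ht₂₁, hflip⟩ :=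
    exists_flip_between (fun t => (vertex p t - a).val < (c - a).val) (s := t₁) (e := t₂)
      (by omega)
  have hu := h.val_sub_le le_rfl
  have ⟨hv, hvc⟩ := later (t := t) (by omega) (by omega)
  have ⟨hw, hwc⟩ := later (t := t + 1) (by omega) (by omega)
  refine hp s(vertex p i, c) (mem_pathEdges.mpr ⟨i, hi, rfl⟩) _
    (mem_pathEdges.mpr ⟨t, by omega, rfl⟩) ?_
  by_cases hin : (vertex p t - a).val < (c - a).val
  · exact crosses_of_val_sub_lt (a := a) (by omega) hin (by omega)
  · rw [Sym2.eq_swap (a := vertex p t)]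
    exact crosses_of_val_sub_lt (a := a) (by omega) (by omega) (by omega)

lemma extend_right (h : IsArcPrefix p a i) (hc : (vertex p (i + 1) - a).val = i + 1) :
    IsArcPrefix p a (i + 1) := by
  refine ⟨fun x => ⟨fun hx => ?_, ?_⟩, Or.inr hc⟩
  · rcases Nat.lt_or_eq_of_le hx with hx | hx
    · obtain ⟨j, hj, rfl⟩ := (h.1 x).1 (Nat.le_of_lt_succ hx)
      exact ⟨j, hj.trans i.le_succ, rfl⟩
    · exact ⟨i + 1, le_rfl, val_sub_left_inj.mp (hc.trans hx.symm)⟩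
  · rintro ⟨j, hj, rfl⟩
    rcases Nat.lt_or_eq_of_le hj with hj | rfl
    · exact (h.val_sub_le (Nat.le_of_lt_succ hj)).trans i.le_succ
    · exact hc.le

lemma extend_left (h : IsArcPrefix p a i) (hi : i + 1 < n)
    (hc : (vertex p (i + 1) - a).val = n - 1) : IsArcPrefix p (vertex p (i + 1)) (i + 1) := by
  set c := vertex p (i + 1)
  have hca : c ≠ a := fun hca => by rw [hca, sub_self, Fin.val_zero] at hc; omega
  have hac : (a - c).val = 1 := by have := val_sub_add_val_sub hca; omega
  have shift {x : Fin n} (hx : x ≠ c) : (x - c).val = (x - a).val + 1 := by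
    have hxa : (x - a).val ≠ n - 1 := fun hxa => hx (val_sub_left_inj.mp (hxa.trans hc.symm))
    have := (x - a).isLt
    rw [← sub_add_sub_cancel x a c, Fin.val_add, hac, Nat.mod_eq_of_lt (by omega)]
  refine ⟨fun x => ⟨fun hx => ?_, ?_⟩, Or.inl (by rw [sub_self, Fin.val_zero])⟩
  · by_cases hxc : x = c
    · exact ⟨i + 1, le_rfl, hxc.symm⟩
    · obtain ⟨j, hj, rfl⟩ := (h.1 x).1 (by rw [shift hxc] at hx; omega)
      exact ⟨j, hj.trans i.le_succ, rfl⟩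
  · rintro ⟨j, hj, rfl⟩
    rcases Nat.lt_or_eq_of_le hj with hj | rfl
    · have hji := h.val_sub_le (Nat.le_of_lt_succ hj)
      rw [shift fun hjc => by rw [hjc] at hji; omega]
      omega
    · rw [sub_self, Fin.val_zero]
      exact Nat.zero_le _

lemma exists_isHullEdge (h : IsArcPrefix p a i) (hi : i + 1 < n) :
    ∃ y, IsHullEdge s(vertex p i, y) ∧ ((y - a).val = i + 1 ∨ (y - a).val = n - 1) := by
  rcases h.2 with hu | hu
  · obtain ⟨y, hy⟩ := exists_val_sub_eq a (show n - 1 < n by omega)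
    rw [val_sub_eq_zero_iff] at hu
    refine ⟨y, isHullEdge_of_val_sub (fun hyu => ?_) (Or.inr (hu ▸ hy)), Or.inr hy⟩
    rw [← hyu, hu, sub_self, Fin.val_zero] at hy
    omega
  · obtain ⟨y, hy⟩ := exists_val_sub_eq a hi
    have hyu : (y - vertex p i).val = 1 := by
      rw [val_sub_eq_sub_of_le (a := a) (by omega)]; omega
    refine ⟨y, isHullEdge_of_val_sub (fun huy => ?_) (Or.inl hyu), Or.inl hy⟩
    rw [huy, sub_self, Fin.val_zero] at hyu
    exact zero_ne_one hyu

lemma vertex_succ_eq_iff (h : IsArcPrefix p a i) (hi : i + 1 < n) {y : Fin n}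
    (hy : i < (y - a).val) : vertex p (i + 1) = y ↔ s(vertex p i, y) ∈ pathEdges p := by
  refine ⟨fun hpy => mem_pathEdges.mpr ⟨i, hi, hpy ▸ rfl⟩, fun hmem => ?_⟩
  obtain ⟨t, ht, he⟩ := mem_pathEdges.mp hmem
  rcases Sym2.eq_iff.mp he with ⟨hit, rfl⟩ | ⟨hit, rfl⟩
  · rw [eq_of_vertex_eq p (by omega) (by omega) hit]
  · have := eq_of_vertex_eq p (by omega) ht hit
    have := h.val_sub_le (j := t) (by omega)
    omega

lemma vertex_succ_eq (h : IsArcPrefix p a i) (hp : NonCrossing (pathEdges p))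
    (hr : NonCrossing (pathEdges r))
    (hH : (pathEdges p).filter (fun e => IsHullEdge e) =
      (pathEdges r).filter (fun e => IsHullEdge e))
    (hpr : ∀ j ≤ i, vertex p j = vertex r j) (hi : i + 1 < n) :
    vertex p (i + 1) = vertex r (i + 1) := by
  have h' := h.congr hpr
  obtain ⟨y, hyH, hy⟩ := h.exists_isHullEdge hi
  have hmem : s(vertex p i, y) ∈ pathEdges p ↔ s(vertex p i, y) ∈ pathEdges r := by
    simpa only [Finset.mem_filter, hyH, and_true] using Finset.ext_iff.mp hH s(vertex p i, y)
  have hstep := (h.vertex_succ_eq_iff hi (by omega)).trans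
    (hmem.trans (hpr i le_rfl ▸ h'.vertex_succ_eq_iff hi (by omega)).symm)
  -- both paths step to `y` or both step to the other neighbour of the arc
  rw [← val_sub_left_inj (a := a), ← val_sub_left_inj (a := a)] at hstep
  have := h.next hp hi
  have := h'.next hr hi
  exact (val_sub_left_inj (a := a)).mp (by omega)

end IsArcPrefix

lemma exists_isArcPrefix {p : Perm (Fin n)} (hp : NonCrossing (pathEdges p)) {i : ℕ}
    (hi : i < n) :
    ∃ a, IsArcPrefix p a i := by
  induction i with
  | zero => exact ⟨_, .zero p⟩
  | succ i ih =>
    obtain ⟨a, h⟩ := ih (by omega)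
    rcases h.next hp hi with hc | hc
    exacts [⟨a, h.extend_right hc⟩, ⟨_, h.extend_left hi hc⟩]

theorem eq_of_hullEdges_eq {p r : Perm (Fin n)} (hp : NonCrossing (pathEdges p))
    (hr : NonCrossing (pathEdges r))
    (hH : (pathEdges p).filter (fun e => IsHullEdge e) =
      (pathEdges r).filter (fun e => IsHullEdge e))
    (h0 : vertex p 0 = vertex r 0) : p = r := by
  have hagree : ∀ i < n, ∀ j ≤ i, vertex p j = vertex r j := by
    intro i hi
    induction i with
    | zero => intro j hj; rwa [Nat.le_zero.mp hj]
    | succ i ih =>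
      obtain ⟨a, h⟩ := exists_isArcPrefix hp (i := i) (by omega)
      intro j hj
      rcases Nat.lt_or_eq_of_le hj with hj | rfl
      · exact ih (by omega) j (Nat.le_of_lt_succ hj)
      · exact h.vertex_succ_eq hp hr hH (ih (by omega)) hi
  exact Equiv.ext fun k => by
    simpa only [vertex, Fin.cast_val_eq_self] using hagree k k.isLt k le_rfl

theorem exists_isHullEdge_mem_vertex_zero {p : Perm (Fin n)} (hp : NonCrossing (pathEdges p))
    (hn : 1 < n) : ∃ e ∈ pathEdges p, IsHullEdge e ∧ vertex p 0 ∈ e := by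
  have hne : vertex p 0 ≠ vertex p (0 + 1) := fun h => by
    have := eq_of_vertex_eq p (NeZero.pos n) hn h; omega
  exact ⟨_, mem_pathEdges.mpr ⟨0, hn, rfl⟩,
    isHullEdge_of_val_sub hne ((IsArcPrefix.zero p).next hp hn), Sym2.mem_mk_left _ _⟩

theorem completion_unique_of_endpoint_general (n : ℕ) :
    (∀ w₁ w₂ : PVert n, (∃ e ∈ w₁.1, ¬ IsHullEdge e) →
      w₁.1.filter (fun e => IsHullEdge e) = w₂.1.filter (fun e => IsHullEdge e) →
      ∀ x : Fin n, degIn w₁.1 x = 1 → degIn w₂.1 x = 1 → w₁ = w₂) ∧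
    (∀ w : PVert n, (∃ e ∈ w.1, ¬ IsHullEdge e) →
      ∀ x : Fin n, degIn w.1 x = 1 → ∃ e ∈ w.1, IsHullEdge e ∧ x ∈ e) := by
  refine ⟨fun w₁ w₂ _ hH x h₁ h₂ => ?_, fun w _ x hx => ?_⟩
  · have : NeZero n := ⟨x.pos.ne'⟩
    obtain ⟨p, hp, hpNC, hp0⟩ := w₁.exists_perm_vertex_zero_eq h₁
    obtain ⟨r, hr, hrNC, hr0⟩ := w₂.exists_perm_vertex_zero_eq h₂
    rw [hp, hr] at hH
    exact Subtype.ext (by rw [hp, hr, eq_of_hullEdges_eq hpNC hrNC hH (hp0.trans hr0.symm)])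
  · have : NeZero n := ⟨x.pos.ne'⟩
    obtain ⟨p, hp, hpNC, rfl⟩ := w.exists_perm_vertex_zero_eq hx
    rw [hp] at hx ⊢
    exact exists_isHullEdge_mem_vertex_zero hpNC (one_lt_of_degIn_ne_zero (hx.trans_ne one_ne_zero))

/-- If the hull edges of a plane spanning path `v` (with at least one diagonal)
decompose into `k ≥ 2` boundary arcs, then: (a) fixing an endpoint of `v`
determines `v` uniquely among paths with the same hull-edge set, and
(b) a degenerate (single-vertex) arc cannot contain an endpoint of `v`. -/
theorem completion_unique_of_endpoint (n : ℕ) (hn : 3 ≤ n) :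
    (∀ w₁ w₂ : PVert n, (∃ e ∈ w₁.1, ¬ IsHullEdge e) →
      w₁.1.filter (fun e => IsHullEdge e) = w₂.1.filter (fun e => IsHullEdge e) →
      ∀ x : Fin n, degIn w₁.1 x = 1 → degIn w₂.1 x = 1 → w₁ = w₂) ∧
    (∀ w : PVert n, (∃ e ∈ w.1, ¬ IsHullEdge e) →
      ∀ x : Fin n, degIn w.1 x = 1 → ∃ e ∈ w.1, IsHullEdge e ∧ x ∈ e) :=
  completion_unique_of_endpoint_general n

end PG
end
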